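/- arXiv:2506.22196 — 2 statements merged into one kernel-verified Lean document; each statement's English description precedes it below -/
import Mathlib

section
/- Let L be a λ-theory satisfying β-equality. Then the families of functions λ_n : A(L)_n = L_{n+1} → L_n and ρ_n : L_n → A(L)_n = L_{n+1} are morphisms of L-presheaves between the theory presheaf L and the presheaf A(L) = L^L, and ρ ∘ λ = id_{A(L)}. Hence the theory presheaf L is a reflexive object in the category Pshf L of L-presheaves. -/
/-- An algebraic theory: a family of sets `T n` with variables
`x_{n,i} : T n` and substitution `• : T m × (T n)^m → T n` satisfying the
three algebraic theory axioms. -/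
structure AlgTh where
  T : ℕ → Type
  xv : ∀ n, Fin n → T n
  subst : ∀ {m n}, T m → (Fin m → T n) → T n
  subst_xv : ∀ {m n} (j : Fin m) (g : Fin m → T n), subst (xv m j) g = g j
  subst_id : ∀ {m} (f : T m), subst f (xv m) = f
  subst_assoc : ∀ {l m n} (f : T l) (g : Fin l → T m) (h : Fin m → T n),
      subst (subst f g) h = subst f fun i => subst (g i) h

namespace AlgTh

variable (S : AlgTh)

/-- Weakening `ι_{n,1} : T n → T (n+1)`. -/
def wk {n : ℕ} (f : S.T n) : S.T (n + 1) :=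
  S.subst f fun j => S.xv (n + 1) j.castSucc

/-- Extension of a tuple: `(ι(h₁), …, ι(h_m), x_{n+1})`. -/
def ext {m n : ℕ} (h : Fin m → S.T n) : Fin (m + 1) → S.T (n + 1) :=
  Fin.snoc (fun i => S.wk (h i)) (S.xv (n + 1) (Fin.last n))

theorem ext_xv (m : ℕ) : S.ext (S.xv m) = S.xv (m + 1) := by
  funext j
  refine Fin.lastCases ?_ (fun i => ?_) j
  · simp [ext]
  · simp [ext, wk, S.subst_xv]

theorem subst_ext {l m n : ℕ} (f : Fin l → S.T m) (g : Fin m → S.T n) :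
    (fun i => S.subst (S.ext f i) (S.ext g)) = S.ext fun i => S.subst (f i) g := by
  funext i
  refine Fin.lastCases ?_ (fun i => ?_) i
  · simp [ext, S.subst_xv]
  · simp only [ext, Fin.snoc_castSucc, wk, S.subst_assoc, S.subst_xv]

end AlgTh

/-- A presheaf for an algebraic theory `S`: a family of sets `P n` with
actions `• : P m × (S n)^m → P n` satisfying the presheaf axioms. -/
structure Pshf (S : AlgTh) where
  P : ℕ → Type
  act : ∀ {m n}, P m → (Fin m → S.T n) → P n
  act_id : ∀ {m} (p : P m), act p (S.xv m) = p
  act_assoc : ∀ {l m n} (p : P l) (f : Fin l → S.T m) (g : Fin m → S.T n),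
      act (act p f) g = act p fun i => S.subst (f i) g

/-- A morphism of `S`-presheaves: a family of functions commuting with the
actions. -/
structure PshfHom {S : AlgTh} (P Q : Pshf S) where
  map : ∀ n, P.P n → Q.P n
  comm : ∀ {m n} (p : P.P m) (t : Fin m → S.T n), map n (P.act p t) = Q.act (map m p) t

namespace PshfHom

variable {S : AlgTh}

theorem ext' {P Q : Pshf S} {f g : PshfHom P Q} (h : f.map = g.map) : f = g := by
  obtain ⟨fm, fc⟩ := f; obtain ⟨gm, gc⟩ := g; cases h; rfl

/-- The identity morphism of presheaves. -/
def idHom (P : Pshf S) : PshfHom P P := ⟨fun _ p => p, fun _ _ => rfl⟩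

/-- Composition of presheaf morphisms. -/
def compHom {P Q R : Pshf S} (g : PshfHom Q R) (f : PshfHom P Q) : PshfHom P R where
  map n p := g.map n (f.map n p)
  comm p t := by rw [f.comm, g.comm]

end PshfHom

/-- The theory presheaf: `S` acting on itself by substitution. -/
def theoryPshf (S : AlgTh) : Pshf S where
  P := S.T
  act := S.subst
  act_id := S.subst_id
  act_assoc := S.subst_assoc

/-- The binary product of presheaves, computed pointwise. -/
def prodPshf {S : AlgTh} (P Q : Pshf S) : Pshf S where
  P n := P.P n × Q.P n
  act p t := (P.act p.1 t, Q.act p.2 t)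
  act_id p := by simp [P.act_id, Q.act_id]
  act_assoc p f g := by simp [P.act_assoc, Q.act_assoc]

/-- The `n`-fold power `Tⁿ` of the theory presheaf: `(Tⁿ)_m = (T m)ⁿ`,
with pointwise action. -/
def powPshf (S : AlgTh) (n : ℕ) : Pshf S where
  P m := Fin n → S.T m
  act t s := fun i => S.subst (t i) s
  act_id t := by funext i; exact S.subst_id (t i)
  act_assoc t f g := by funext i; exact S.subst_assoc (t i) f g

/-- The product-of-morphisms `h × k` between product presheaves. -/
def prodMapHom {S : AlgTh} {P P' Q Q' : Pshf S} (h : PshfHom P P') (k : PshfHom Q Q') :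
    PshfHom (prodPshf P Q) (prodPshf P' Q') where
  map n p := (h.map n p.1, k.map n p.2)
  comm p t := by simp [prodPshf, h.comm, k.comm]

/-- The presheaf `A(Q)`, with `A(Q)_n = Q_{n+1}` and action
`q •_{A(Q)} f = q •_Q (ι(f₁), …, ι(f_m), x_{n+1})`; it is the exponential
`Q^T` of `Q` by the theory presheaf. -/
def APshf {S : AlgTh} (Q : Pshf S) : Pshf S where
  P n := Q.P (n + 1)
  act q f := Q.act q (S.ext f)
  act_id q := by rw [S.ext_xv]; exact Q.act_id q
  act_assoc q f g := by rw [Q.act_assoc, S.subst_ext]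

/-- A λ-theory satisfying β-equality: an algebraic theory with abstraction
`λₙ : L_{n+1} → Lₙ` and application `ρₙ : Lₙ → L_{n+1}`, compatible with
substitution, such that `ρₙ ∘ λₙ = id`. -/
structure LamThB extends AlgTh where
  abs : ∀ {n}, T (n + 1) → T n
  rho : ∀ {n}, T n → T (n + 1)
  abs_subst : ∀ {m n} (f : T (m + 1)) (h : Fin m → T n),
      subst (abs f) h = abs (subst f (toAlgTh.ext h))
  rho_subst : ∀ {m n} (g : T m) (h : Fin m → T n),
      rho (subst g h) = subst (rho g) (toAlgTh.ext h)
  beta : ∀ {n} (f : T (n + 1)), rho (abs f) = f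

/-!
Both `λ` and `ρ` commute with substitution by the very axioms of a λ-theory, since the action
of `A(L)` is substitution along the extended tuple `(ι h₁, …, ι hₘ, x_{n+1})`; β-equality is
the retraction. What remains is that `A(Q)` is the exponential `Q^L`: a morphism
`f : P × L → Q` curries to `p ↦ f (ι p, x_{n+1})`, and `g : P → A(Q)` uncurries to
`(p, s) ↦ g p • (x₁, …, xₙ, s)`. The two are inverse because instantiating the fresh last
variable of a weakened term gives the term back.
-/

namespace AlgTh

variable (S : AlgTh)

/-- `S.wk f = S.subst f (S.wkVars n)` holds by `rfl`. -/
def wkVars (n : ℕ) : Fin n → S.T (n + 1) :=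
  Fin.init (S.xv (n + 1))

theorem wkVars_subst {n k : ℕ} (g : Fin (n + 1) → S.T k) :
    (fun i => S.subst (S.wkVars n i) g) = Fin.init g :=
  funext fun _ => S.subst_xv _ _

theorem wkVars_subst_snoc {n k : ℕ} (g : Fin n → S.T k) (s : S.T k) :
    (fun i => S.subst (S.wkVars n i) (Fin.snoc g s)) = g := by
  rw [wkVars_subst, Fin.init_snoc]

theorem wk_subst_snoc {n k : ℕ} (f : S.T n) (g : Fin n → S.T k) (s : S.T k) :
    S.subst (S.wk f) (Fin.snoc g s) = S.subst f g := by
  rw [wk, S.subst_assoc]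
  exact congrArg (S.subst f) (S.wkVars_subst_snoc g s)

theorem wkVars_subst_ext {m n : ℕ} (t : Fin m → S.T n) :
    (fun i => S.subst (S.wkVars m i) (S.ext t)) = fun i => S.wk (t i) := by
  rw [wkVars_subst, ext, Fin.init_snoc]

theorem ext_subst_snoc {m n k : ℕ} (t : Fin m → S.T n) (g : Fin n → S.T k) (s : S.T k) :
    (fun i => S.subst (S.ext t i) (Fin.snoc g s)) = Fin.snoc (fun i => S.subst (t i) g) s := by
  funext i
  refine Fin.lastCases ?_ (fun j => ?_) i
  · simp only [ext, Fin.snoc_last, S.subst_xv]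
  · simp only [ext, Fin.snoc_castSucc, S.wk_subst_snoc]

theorem snoc_xv_subst {m n : ℕ} (s : S.T m) (t : Fin m → S.T n) :
    (fun i => S.subst ((Fin.snoc (S.xv m) s : Fin (m + 1) → S.T m) i) t) =
      Fin.snoc t (S.subst s t) := by
  funext i
  refine Fin.lastCases ?_ (fun j => ?_) i
  · simp only [Fin.snoc_last]
  · simp only [Fin.snoc_castSucc, S.subst_xv]

end AlgTh

namespace PshfHom

variable {S : AlgTh} {P Q : Pshf S}

def curry (f : PshfHom (prodPshf P (theoryPshf S)) Q) : PshfHom P (APshf Q) where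
  map n p := f.map (n + 1) (P.act p (S.wkVars n), S.xv (n + 1) (Fin.last n))
  comm {m n} p t := by
    refine (congrArg (f.map (n + 1)) ?_).trans (f.comm _ (S.ext t))
    refine Prod.ext ?_ ?_
    · change P.act (P.act p t) _ = P.act (P.act p _) _
      rw [P.act_assoc, P.act_assoc, S.wkVars_subst_ext]
      rfl
    · change _ = S.subst _ _
      rw [S.subst_xv, AlgTh.ext, Fin.snoc_last]

def uncurry (g : PshfHom P (APshf Q)) : PshfHom (prodPshf P (theoryPshf S)) Q where
  map n q := Q.act (g.map n q.1) (Fin.snoc (S.xv n) q.2)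
  comm {m n} q t := by
    obtain ⟨p, s⟩ := q
    calc Q.act (g.map n (P.act p t)) (Fin.snoc (S.xv n) (S.subst s t))
        = Q.act (Q.act (g.map m p) (S.ext t)) (Fin.snoc (S.xv n) (S.subst s t)) :=
          congrArg (Q.act · _) (g.comm p t)
      _ = Q.act (g.map m p) (Fin.snoc t (S.subst s t)) := by
          refine (Q.act_assoc _ _ _).trans (congrArg (Q.act _) ?_)
          rw [S.ext_subst_snoc]
          simp only [S.subst_id]
      _ = Q.act (Q.act (g.map m p) (Fin.snoc (S.xv m) s)) t :=
          (congrArg (Q.act _) (S.snoc_xv_subst s t).symm).trans (Q.act_assoc _ _ _).symm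

theorem curry_uncurry (g : PshfHom P (APshf Q)) : (uncurry g).curry = g := by
  apply PshfHom.ext'
  funext n p
  refine (congrArg (Q.act · _) (g.comm p _)).trans ((Q.act_assoc _ _ _).trans ?_)
  refine (congrArg (Q.act _) ?_).trans (Q.act_id _)
  rw [S.ext_subst_snoc, S.wkVars_subst]
  exact Fin.snoc_init_self _

theorem uncurry_curry (f : PshfHom (prodPshf P (theoryPshf S)) Q) : (curry f).uncurry = f := by
  apply PshfHom.ext'
  funext n ⟨p, s⟩
  refine (f.comm _ _).symm.trans (congrArg (f.map n) (Prod.ext ?_ ?_))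
  · change P.act (P.act p _) _ = p
    rw [P.act_assoc]
    exact (congrArg (P.act p) (S.wkVars_subst_snoc _ _)).trans (P.act_id p)
  · exact (S.subst_xv _ _).trans (Fin.snoc_last _ _)

def curryEquiv (P Q : Pshf S) : PshfHom (prodPshf P (theoryPshf S)) Q ≃ PshfHom P (APshf Q) where
  toFun := curry
  invFun := uncurry
  left_inv := uncurry_curry
  right_inv := curry_uncurry

theorem curry_comp_prodMapHom {P' : Pshf S} (h : PshfHom P' P)
    (f : PshfHom (prodPshf P (theoryPshf S)) Q) :
    curry (f.compHom (prodMapHom h (idHom (theoryPshf S)))) = (curry f).compHom h := by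
  apply PshfHom.ext'
  funext n p
  change f.map (n + 1) (h.map (n + 1) (P'.act p _), _) = f.map (n + 1) (P.act (h.map n p) _, _)
  rw [h.comm]
  rfl

end PshfHom

namespace LamThB

variable (L : LamThB)

def absHom : PshfHom (APshf (theoryPshf L.toAlgTh)) (theoryPshf L.toAlgTh) where
  map _ := L.abs
  comm q t := (L.abs_subst q t).symm

def rhoHom : PshfHom (theoryPshf L.toAlgTh) (APshf (theoryPshf L.toAlgTh)) where
  map _ := L.rho
  comm := L.rho_subst

end LamThB

/-- Let `L` be a λ-theory satisfying β-equality.  Then the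
families of functions `λₙ : A(L)ₙ = L_{n+1} → Lₙ` and `ρₙ : Lₙ → A(L)ₙ = L_{n+1}`
are morphisms of `L`-presheaves between the theory presheaf `L` and the
presheaf `A(L) = L^L`, and `ρ ∘ λ = id_{A(L)}`.  Hence the theory presheaf `L`
is a reflexive object in the category `Pshf L` of `L`-presheaves (`A(L)` being
the exponential of the theory presheaf by itself). -/
theorem theory_presheaf_reflexive (L : LamThB) :
    -- `λ` is a presheaf morphism `A(L) → L`
    (∃ absHom : PshfHom (APshf (theoryPshf L.toAlgTh)) (theoryPshf L.toAlgTh),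
      ∀ (n : ℕ) (q : L.T (n + 1)), absHom.map n q = L.abs q) ∧
    -- `ρ` is a presheaf morphism `L → A(L)`
    (∃ rhoHom : PshfHom (theoryPshf L.toAlgTh) (APshf (theoryPshf L.toAlgTh)),
      ∀ (n : ℕ) (g : L.T n), rhoHom.map n g = L.rho g) ∧
    -- the retraction `ρ ∘ λ = id_{A(L)}`
    (∀ (n : ℕ) (q : L.T (n + 1)), L.rho (L.abs q) = q) ∧
    -- `A(L)` is the exponential `L^L`, so the theory presheaf is a reflexive
    -- object of `Pshf L`
    ∃ e : ∀ P : Pshf L.toAlgTh,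
        PshfHom (prodPshf P (theoryPshf L.toAlgTh)) (theoryPshf L.toAlgTh) ≃
          PshfHom P (APshf (theoryPshf L.toAlgTh)),
      ∀ (P P' : Pshf L.toAlgTh) (h : PshfHom P' P)
        (f : PshfHom (prodPshf P (theoryPshf L.toAlgTh)) (theoryPshf L.toAlgTh)),
        e P' (f.compHom (prodMapHom h (PshfHom.idHom (theoryPshf L.toAlgTh)))) =
          (e P f).compHom h :=
  ⟨⟨L.absHom, fun _ _ => rfl⟩, ⟨L.rhoHom, fun _ _ => rfl⟩, fun _ => L.beta,
    ⟨fun P => PshfHom.curryEquiv P _, fun _ _ => PshfHom.curry_comp_prodMapHom⟩⟩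
end

section
/- Let T be an algebraic theory and 𝐋 its associated Lawvere theory. Then the category Pshf T of T-presheaves is equivalent to the category of presheaves 𝐋ᵒᵖ ⥤ Set on 𝐋: a T-presheaf P corresponds to the functor Q with Q(n) = P_n, whose action on a morphism in 𝐋(n, m) = T_n^m is given by the T-action P_m × T_n^m → P_n. -/
open CategoryTheory

/-- The category `Pshf S` of `S`-presheaves and their morphisms. -/
instance pshfCategory (S : AlgTh) : Category (Pshf S) where
  Hom := PshfHom
  id := PshfHom.idHom
  comp f g := g.compHom f
  id_comp _ := PshfHom.ext' rfl
  comp_id _ := PshfHom.ext' rfl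
  assoc _ _ _ := PshfHom.ext' rfl

/-- The Lawvere theory `𝐋` associated to an algebraic theory `S`: objects the
natural numbers, morphisms `𝐋(m, n) = (S m)ⁿ`, identity `(x_{n,i})ᵢ`, and
composition `g ∘ f = (gᵢ • f)ᵢ`. -/
def Lawv (_S : AlgTh) : Type := ℕ

instance lawvCategory (S : AlgTh) : Category (Lawv S) where
  Hom m n := Fin n → S.T m
  id m := S.xv m
  comp {_ _ _} f g := fun i => S.subst (g i) f
  id_comp f := by funext i; exact S.subst_id (f i)
  comp_id f := by funext i; exact S.subst_xv i f
  assoc f g h := by funext i; exact (S.subst_assoc (h i) g f).symm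

/-- The functor sending an `S`-presheaf `P` to the presheaf on the Lawvere
theory `𝐋` with `Q(n) = Pₙ`, whose action on a morphism in `𝐋(n, m) = (S n)ᵐ`
is given by the `S`-action `P m × (S n)ᵐ → P n`. -/
def pshfToLawverePshf (S : AlgTh) : Pshf S ⥤ ((Lawv S)ᵒᵖ ⥤ Type) where
  obj P :=
    { obj := fun n => P.P n.unop
      map := fun f => TypeCat.ofHom fun p => P.act p f.unop
      map_id := fun n => by ext p; exact P.act_id p
      map_comp := fun f g => by ext p; exact (P.act_assoc p _ _).symm }
  map h :=
    { app := fun n => TypeCat.ofHom fun p => h.map n.unop p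
      naturality := fun m n f => by ext p; exact h.comm p f.unop }
  map_id P := by apply NatTrans.ext; funext n; ext p; rfl
  map_comp f g := by apply NatTrans.ext; funext n; ext p; rfl

namespace Lawv

variable {S : AlgTh}

/-- Elaboration would read `n ⟶ m` as a morphism of `ℕ`, not of `Lawv S`. -/
def homOfTuple {m n : ℕ} (t : Fin m → S.T n) : @Quiver.Hom (Lawv S) _ n m := t

end Lawv

open Lawv

namespace Pshf

variable {S : AlgTh}

def ofLawverePshf (F : (Lawv S)ᵒᵖ ⥤ Type) : Pshf S where
  P n := F.obj (Opposite.op n)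
  act p f := F.map (homOfTuple f).op p
  act_id p := ConcreteCategory.congr_hom (F.map_id _) p
  act_assoc p f g :=
    (ConcreteCategory.congr_hom (F.map_comp (homOfTuple f).op (homOfTuple g).op) p).symm

def homOfNatTrans {P Q : Pshf S}
    (α : (pshfToLawverePshf S).obj P ⟶ (pshfToLawverePshf S).obj Q) : PshfHom P Q where
  map n := (α.app (Opposite.op n)).hom
  comm p t := ConcreteCategory.congr_hom (α.naturality (homOfTuple t).op) p

end Pshf

section

variable (S : AlgTh)

def pshfToLawverePshfObjOfLawverePshfIso (F : (Lawv S)ᵒᵖ ⥤ Type) :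
    (pshfToLawverePshf S).obj (Pshf.ofLawverePshf F) ≅ F :=
  NatIso.ofComponents (fun _ => Iso.refl _) (fun _ => rfl)

theorem pshfToLawverePshf_faithful : (pshfToLawverePshf S).Faithful where
  map_injective h := PshfHom.ext' <| funext fun n => funext fun p =>
    ConcreteCategory.congr_hom (NatTrans.congr_app h (Opposite.op n)) p

theorem pshfToLawverePshf_full : (pshfToLawverePshf S).Full where
  map_surjective α := ⟨Pshf.homOfNatTrans α, rfl⟩

theorem pshfToLawverePshf_essSurj : (pshfToLawverePshf S).EssSurj where
  mem_essImage F := ⟨Pshf.ofLawverePshf F, ⟨pshfToLawverePshfObjOfLawverePshfIso S F⟩⟩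

end

/-- Let `T` be an algebraic theory and `𝐋` its associated
Lawvere theory.  Then the category `Pshf T` of `T`-presheaves is equivalent to
the category of presheaves `𝐋ᵒᵖ ⥤ Type` on `𝐋`, via the functor sending a
`T`-presheaf `P` to the functor `Q` with `Q(n) = Pₙ`, whose action on a
morphism in `𝐋(n, m) = Tₙᵐ` is given by the `T`-action `P_m × Tₙᵐ → Pₙ`. -/
theorem pshf_equiv_lawvere_presheaves (S : AlgTh) :
    (pshfToLawverePshf S).IsEquivalence :=
  { faithful := pshfToLawverePshf_faithful S
    full := pshfToLawverePshf_full S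
    essSurj := pshfToLawverePshf_essSurj S }
end
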